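/- arXiv:2203.07652 — 3 statements merged into one kernel-verified Lean document; each statement's English description precedes it below -/
import Mathlib

section
/- Let a > 0 and M > 0. For x ∈ (aℤ)², define g(x) = (2π)^{−2} ∫_{[−π/a,π/a]²} e^{i k·x} / (|σ(k)|² + M²) dk, where |σ(k)|² = ∑_{μ∈{0,1}} 2(1 − cos(a k_μ))/a². Then: (i) g(x) is real and g(x) ≥ 0 for every x ∈ (aℤ)²; (ii) the family (g(x))_{x∈(aℤ)²} is summable and a² ∑_{x∈(aℤ)²} g(x) = 1/M². Consequently the ℓ¹ norm a² ∑_{x∈(aℤ)²} |g(x)| equals M^{−2}. -/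
/-!
Write `D = 4 + a²M²` and `f(k) = 2 cos(a k₁) + 2 cos(a k₂)`. Then `|σ(k)|² + M² = (D - f(k))/a²`
with `|f| ≤ 4 < D`, so the integrand expands into the geometric series `a² ∑ₘ fᵐ/Dᵐ⁺¹`.
Multiplying a plane wave `e^{ik·x}` by `f` gives the sum of the plane waves at the four lattice
neighbours of `x`, so the Fourier coefficients of `fᵐ` are `(2π/a)²` times the number `Nₘ(x)` of
`m`-step nearest-neighbour walks joining `0` and `x`. This yields the random-walk representation
`g(x) = ∑ₘ Nₘ(x)/Dᵐ⁺¹ ≥ 0`, and summing over `x` first, with `∑ₓ Nₘ(x) = 4ᵐ`, gives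
`∑ₓ g(x) = ∑ₘ 4ᵐ/Dᵐ⁺¹ = 1/(D - 4) = 1/(a²M²)`.
-/

open Real MeasureTheory Complex

noncomputable section

namespace SommerfieldStmt3

/-- The lattice symbol `|σ(k)|² = ∑_{μ∈{0,1}} 2(1 − cos(a k_μ))/a²`. -/
def sigmaSq (a : ℝ) (k : ℝ × ℝ) : ℝ :=
  2 * (1 - Real.cos (a * k.1)) / a ^ 2 + 2 * (1 - Real.cos (a * k.2)) / a ^ 2

/-- The Brillouin zone `[−π/a, π/a]²`. -/
def BZ (a : ℝ) : Set (ℝ × ℝ) :=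
  Set.Icc (-(π / a)) (π / a) ×ˢ Set.Icc (-(π / a)) (π / a)

/-- The position-space boson propagator kernel at the lattice site
`x = (a n₁, a n₂) ∈ (aℤ)²`:
`g(x) = (2π)⁻² ∫_{[−π/a,π/a]²} e^{i k·x} / (|σ(k)|² + M²) dk`. -/
def g (a M : ℝ) (n : ℤ × ℤ) : ℂ :=
  ((2 * π : ℝ) ^ 2 : ℂ)⁻¹ *
    ∫ k in BZ a,
      Complex.exp (Complex.I * (k.1 * (a * (n.1 : ℝ)) + k.2 * (a * (n.2 : ℝ)))) /
        ((sigmaSq a k + M ^ 2 : ℝ) : ℂ)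

theorem hasSum_pow_div_pow_succ {x D : ℝ} (h : |x| < D) :
    HasSum (fun m : ℕ => x ^ m / D ^ (m + 1)) (D - x)⁻¹ := by
  have hD : 0 < D := (abs_nonneg x).trans_lt h
  have hr : |x / D| < 1 := by rwa [abs_div, abs_of_pos hD, div_lt_one hD]
  have hxD : D - x ≠ 0 := by linarith [le_abs_self x]
  have hterm : (fun m : ℕ => x ^ m / D ^ (m + 1)) = fun m => (x / D) ^ m / D := by
    ext m; rw [div_pow, pow_succ, div_div]
  have hsum : (D - x)⁻¹ = (1 - x / D)⁻¹ / D := by field_simp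
  rw [hterm, hsum]
  exact (hasSum_geometric_of_abs_lt_one hr).div_const D

theorem hasSum_tsum_swap_of_nonneg {β γ : Type*} {f : β × γ → ℝ} (hf : 0 ≤ f) {h : β → ℝ}
    {s : ℝ} (hfib : ∀ b, HasSum (fun c => f (b, c)) (h b)) (hs : HasSum h s) :
    HasSum (fun c => ∑' b, f (b, c)) s := by
  have hsum : Summable f := (summable_prod_of_nonneg hf).2
    ⟨fun b => (hfib b).summable, by simpa only [(hfib _).tsum_eq] using hs.summable⟩
  have hf_s : HasSum f s := by
    rw [hsum.hasSum_iff]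
    exact (hsum.hasSum.prod_fiberwise hfib).unique hs
  have hswap := (Equiv.prodComm γ β).hasSum_iff.2 hf_s
  exact hswap.prod_fiberwise fun c => (hswap.summable.prod_factor c).hasSum

def walkCount : ℕ → ℤ × ℤ → ℕ
  | 0, n => if n = 0 then 1 else 0
  | m + 1, n => walkCount m (n + (1, 0)) + walkCount m (n - (1, 0)) +
      walkCount m (n + (0, 1)) + walkCount m (n - (0, 1))

theorem hasSum_walkCount (m : ℕ) : HasSum (fun n => (walkCount m n : ℝ)) (4 ^ m) := by
  induction m with
  | zero => simpa [walkCount] using hasSum_ite_eq (0 : ℤ × ℤ) (1 : ℝ)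
  | succ m ih =>
    have shift (v : ℤ × ℤ) : HasSum (fun n => (walkCount m (n + v) : ℝ)) (4 ^ m) :=
      (Equiv.addRight v).hasSum_iff.2 ih
    have shift' (v : ℤ × ℤ) : HasSum (fun n => (walkCount m (n - v) : ℝ)) (4 ^ m) :=
      by simpa only [sub_eq_add_neg] using shift (-v)
    simp only [walkCount, Nat.cast_add]
    rw [show (4 : ℝ) ^ (m + 1) = 4 ^ m + 4 ^ m + 4 ^ m + 4 ^ m by ring]
    exact (((shift (1, 0)).add (shift' (1, 0))).add (shift (0, 1))).add (shift' (0, 1))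

def hoppingSymbol (a : ℝ) (k : ℝ × ℝ) : ℝ := 2 * Real.cos (a * k.1) + 2 * Real.cos (a * k.2)

def planeWave (a : ℝ) (n : ℤ × ℤ) (k : ℝ × ℝ) : ℂ :=
  Complex.exp (Complex.I * (k.1 * (a * (n.1 : ℝ)) + k.2 * (a * (n.2 : ℝ))))

theorem norm_planeWave (a : ℝ) (n : ℤ × ℤ) (k : ℝ × ℝ) : ‖planeWave a n k‖ = 1 := by
  rw [planeWave, Complex.norm_exp]
  simp

theorem abs_hoppingSymbol_le (a : ℝ) (k : ℝ × ℝ) : |hoppingSymbol a k| ≤ 4 := by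
  rw [hoppingSymbol, abs_le]
  constructor <;>
    linarith [Real.neg_one_le_cos (a * k.1), Real.cos_le_one (a * k.1),
      Real.neg_one_le_cos (a * k.2), Real.cos_le_one (a * k.2)]

theorem planeWave_add (a : ℝ) (n v : ℤ × ℤ) (k : ℝ × ℝ) :
    planeWave a (n + v) k = planeWave a n k * planeWave a v k := by
  simp only [planeWave, ← Complex.exp_add, Prod.fst_add, Prod.snd_add]
  push_cast
  ring_nf

theorem ofReal_hoppingSymbol (a : ℝ) (k : ℝ × ℝ) :
    (hoppingSymbol a k : ℂ) = planeWave a (1, 0) k + planeWave a (-1, 0) k +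
      planeWave a (0, 1) k + planeWave a (0, -1) k := by
  simp only [hoppingSymbol, planeWave]
  push_cast
  rw [Complex.two_cos, Complex.two_cos]
  ring_nf

theorem planeWave_mul_hoppingSymbol (a : ℝ) (n : ℤ × ℤ) (k : ℝ × ℝ) :
    planeWave a n k * hoppingSymbol a k =
      planeWave a (n + (1, 0)) k + planeWave a (n - (1, 0)) k +
        planeWave a (n + (0, 1)) k + planeWave a (n - (0, 1)) k := by
  simp only [ofReal_hoppingSymbol, sub_eq_add_neg, Prod.neg_mk, neg_zero, planeWave_add]
  ring

theorem isCompact_BZ (a : ℝ) : IsCompact (BZ a) := isCompact_Icc.prod isCompact_Icc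

@[fun_prop]
theorem continuous_planeWave (a : ℝ) (n : ℤ × ℤ) : Continuous (planeWave a n) := by
  unfold planeWave; fun_prop

@[fun_prop]
theorem continuous_hoppingSymbol (a : ℝ) : Continuous (hoppingSymbol a) := by
  unfold hoppingSymbol; fun_prop

theorem integral_Icc_exp_I_mul_int {a : ℝ} (ha : 0 < a) (j : ℤ) :
    ∫ u in Set.Icc (-(π / a)) (π / a), Complex.exp (Complex.I * (u * (a * (j : ℝ)))) =
      if j = 0 then ((2 * π / a : ℝ) : ℂ) else 0 := by
  have hle : -(π / a) ≤ π / a := by linarith [div_pos pi_pos ha]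
  rw [integral_Icc_eq_integral_Ioc, ← intervalIntegral.integral_of_le hle]
  split_ifs with hj
  · simp only [hj, Int.cast_zero, mul_zero, Complex.ofReal_zero, Complex.exp_zero,
      intervalIntegral.integral_const, Complex.real_smul, mul_one]
    push_cast; ring
  · have hc : Complex.I * (a * j) ≠ 0 := by simp [ha.ne', hj, Complex.I_ne_zero]
    simp_rw [show ∀ u : ℝ, Complex.I * ((u : ℂ) * ((a : ℝ) * ((j : ℝ) : ℂ))) =
      Complex.I * (a * j) * u from fun u => by push_cast; ring]
    rw [integral_exp_mul_complex hc, div_eq_zero_iff, sub_eq_zero]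
    left
    have hperiod : Complex.I * (a * j) * ((π / a : ℝ) : ℂ) =
        Complex.I * (a * j) * ((-(π / a) : ℝ) : ℂ) + j * (2 * π * Complex.I) := by
      have ha' : (a : ℂ) ≠ 0 := by exact_mod_cast ha.ne'
      push_cast
      field_simp
      ring
    rw [hperiod, Complex.exp_add, Complex.exp_int_mul_two_pi_mul_I, mul_one]

theorem integral_planeWave {a : ℝ} (ha : 0 < a) (n : ℤ × ℤ) :
    ∫ k in BZ a, planeWave a n k = if n = 0 then (((2 * π / a) ^ 2 : ℝ) : ℂ) else 0 := by
  have hprod : ∀ k : ℝ × ℝ, planeWave a n k =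
      Complex.exp (Complex.I * (k.1 * (a * (n.1 : ℝ)))) *
        Complex.exp (Complex.I * (k.2 * (a * (n.2 : ℝ)))) := fun k => by
    rw [planeWave, ← Complex.exp_add, mul_add]
  simp_rw [hprod]
  rw [BZ, Measure.volume_eq_prod,
    setIntegral_prod_mul (fun u : ℝ => Complex.exp (Complex.I * (u * (a * (n.1 : ℝ)))))
      (fun v : ℝ => Complex.exp (Complex.I * (v * (a * (n.2 : ℝ))))),
    integral_Icc_exp_I_mul_int ha,
    integral_Icc_exp_I_mul_int ha]
  obtain ⟨n₁, n₂⟩ := n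
  by_cases h₁ : n₁ = 0 <;> by_cases h₂ : n₂ = 0 <;> simp [h₁, h₂, sq]

theorem integral_planeWave_mul_hoppingSymbol_pow {a : ℝ} (ha : 0 < a) (m : ℕ) (n : ℤ × ℤ) :
    ∫ k in BZ a, planeWave a n k * (hoppingSymbol a k : ℂ) ^ m =
      (((2 * π / a) ^ 2 * walkCount m n : ℝ) : ℂ) := by
  induction m generalizing n with
  | zero =>
    simp only [pow_zero, mul_one, integral_planeWave ha, walkCount]
    split_ifs <;> simp
  | succ m ih =>
    have hint (v : ℤ × ℤ) :
        IntegrableOn (fun k => planeWave a v k * (hoppingSymbol a k : ℂ) ^ m) (BZ a) :=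
      (Continuous.continuousOn (by fun_prop)).integrableOn_compact (isCompact_BZ a)
    have hstep (k : ℝ × ℝ) : planeWave a n k * (hoppingSymbol a k : ℂ) ^ (m + 1) =
        planeWave a (n + (1, 0)) k * (hoppingSymbol a k : ℂ) ^ m +
          planeWave a (n - (1, 0)) k * (hoppingSymbol a k : ℂ) ^ m +
          planeWave a (n + (0, 1)) k * (hoppingSymbol a k : ℂ) ^ m +
          planeWave a (n - (0, 1)) k * (hoppingSymbol a k : ℂ) ^ m := by
      rw [pow_succ', ← mul_assoc, planeWave_mul_hoppingSymbol]
      ring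
    simp_rw [hstep]
    rw [integral_add, integral_add, integral_add, ih, ih, ih, ih, walkCount]
    · push_cast
      ring
    all_goals first
      | exact hint _
      | exact (hint _).add (hint _)
      | exact ((hint _).add (hint _)).add (hint _)

theorem sigmaSq_add_sq {a : ℝ} (ha : a ≠ 0) (M : ℝ) (k : ℝ × ℝ) :
    sigmaSq a k + M ^ 2 = (4 + a ^ 2 * M ^ 2 - hoppingSymbol a k) / a ^ 2 := by
  rw [sigmaSq, hoppingSymbol]
  field_simp
  ring

theorem hasSum_inv_sigmaSq_add_sq {a M : ℝ} (ha : a ≠ 0) (hM : M ≠ 0) (k : ℝ × ℝ) :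
    HasSum (fun m : ℕ => a ^ 2 * (hoppingSymbol a k ^ m / (4 + a ^ 2 * M ^ 2) ^ (m + 1)))
      (sigmaSq a k + M ^ 2)⁻¹ := by
  have hlt : |hoppingSymbol a k| < 4 + a ^ 2 * M ^ 2 := by
    linarith [abs_hoppingSymbol_le a k, show 0 < a ^ 2 * M ^ 2 by positivity]
  rw [sigmaSq_add_sq ha, inv_div, div_eq_mul_inv]
  exact (hasSum_pow_div_pow_succ hlt).mul_left (a ^ 2)

theorem hasSum_setIntegral_planeWave_mul {a M : ℝ} (ha : a ≠ 0) (hM : M ≠ 0) (n : ℤ × ℤ) :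
    HasSum (fun m : ℕ => ∫ k in BZ a, planeWave a n k *
        ((a ^ 2 * (hoppingSymbol a k ^ m / (4 + a ^ 2 * M ^ 2) ^ (m + 1)) : ℝ) : ℂ))
      (∫ k in BZ a, planeWave a n k * ((sigmaSq a k + M ^ 2)⁻¹ : ℝ)) := by
  have hD : |(4 : ℝ)| < 4 + a ^ 2 * M ^ 2 := by
    rw [abs_of_pos four_pos]
    exact lt_add_of_pos_right _ (by positivity)
  have : IsFiniteMeasure (volume.restrict (BZ a)) :=
    isFiniteMeasure_restrict.2 (isCompact_BZ a).measure_lt_top.ne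
  refine hasSum_integral_of_dominated_convergence
    (fun m _ => a ^ 2 * (4 ^ m / (4 + a ^ 2 * M ^ 2) ^ (m + 1)))
    (fun m => Continuous.aestronglyMeasurable (by fun_prop)) (fun m => ae_of_all _ fun k => ?_)
    (ae_of_all _ fun _ => ((hasSum_pow_div_pow_succ hD).mul_left _).summable)
    (integrable_const _)
    (ae_of_all _ fun k => (Complex.hasSum_ofReal.2 (hasSum_inv_sigmaSq_add_sq ha hM k)).mul_left _)
  rw [norm_mul, norm_planeWave, one_mul, Complex.norm_real, Real.norm_eq_abs, abs_mul, abs_div,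
    abs_of_pos (by positivity : (0 : ℝ) < (4 + a ^ 2 * M ^ 2) ^ (m + 1)), abs_pow, abs_pow, sq_abs]
  gcongr
  exact abs_hoppingSymbol_le a k

theorem hasSum_g {a M : ℝ} (ha : 0 < a) (hM : M ≠ 0) (n : ℤ × ℤ) :
    HasSum (fun m : ℕ => ((walkCount m n / (4 + a ^ 2 * M ^ 2) ^ (m + 1) : ℝ) : ℂ))
      (g a M n) := by
  have hsum := (hasSum_setIntegral_planeWave_mul ha.ne' hM n).mul_left ((2 * π : ℝ) ^ 2 : ℂ)⁻¹
  set D := 4 + a ^ 2 * M ^ 2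
  have ha' : (a : ℂ) ≠ 0 := by exact_mod_cast ha.ne'
  have hcoeff (m : ℕ) : ∫ k in BZ a, planeWave a n k *
      ((a ^ 2 * (hoppingSymbol a k ^ m / D ^ (m + 1)) : ℝ) : ℂ) =
        ((2 * π : ℝ) ^ 2 : ℂ) * ((walkCount m n / D ^ (m + 1) : ℝ) : ℂ) := by
    have hpull (k : ℝ × ℝ) :
        planeWave a n k * ((a ^ 2 * (hoppingSymbol a k ^ m / D ^ (m + 1)) : ℝ) : ℂ) =
          ((a ^ 2 / D ^ (m + 1) : ℝ) : ℂ) * (planeWave a n k * (hoppingSymbol a k : ℂ) ^ m) := by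
      push_cast; ring
    simp_rw [hpull]
    rw [integral_const_mul, integral_planeWave_mul_hoppingSymbol_pow ha]
    push_cast
    field_simp
  simp only [hcoeff, inv_mul_cancel_left₀ (pow_ne_zero 2 (Complex.ofReal_ne_zero.2 two_pi_pos.ne'))]
    at hsum
  simpa only [g, planeWave, div_eq_mul_inv, Complex.ofReal_inv] using hsum

def walkKernel (D : ℝ) (n : ℤ × ℤ) : ℝ := ∑' m : ℕ, walkCount m n / D ^ (m + 1)

theorem walkKernel_nonneg {D : ℝ} (hD : 0 ≤ D) (n : ℤ × ℤ) : 0 ≤ walkKernel D n :=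
  tsum_nonneg fun m => by positivity

theorem hasSum_walkKernel {D : ℝ} (hD : 4 < D) : HasSum (walkKernel D) (D - 4)⁻¹ := by
  have hnonneg : 0 ≤ fun p : ℕ × (ℤ × ℤ) => (walkCount p.1 p.2 : ℝ) / D ^ (p.1 + 1) :=
    fun p => by dsimp only; positivity
  have hfib (m : ℕ) : HasSum (fun n => (walkCount m n : ℝ) / D ^ (m + 1)) (4 ^ m / D ^ (m + 1)) :=
    (hasSum_walkCount m).div_const _
  have htot : HasSum (fun m : ℕ => (4 : ℝ) ^ m / D ^ (m + 1)) (D - 4)⁻¹ :=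
    hasSum_pow_div_pow_succ (by rwa [abs_of_pos four_pos])
  exact hasSum_tsum_swap_of_nonneg hnonneg hfib htot

theorem g_eq_walkKernel {a M : ℝ} (ha : 0 < a) (hM : M ≠ 0) (n : ℤ × ℤ) :
    g a M n = walkKernel (4 + a ^ 2 * M ^ 2) n := by
  rw [← (hasSum_g ha hM n).tsum_eq, ← Complex.ofReal_tsum, walkKernel]

theorem boson_propagator_position_space (a M : ℝ) (ha : 0 < a) (hM : 0 < M) :
    (∀ n : ℤ × ℤ, (g a M n).im = 0 ∧ 0 ≤ (g a M n).re) ∧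
    Summable (fun n : ℤ × ℤ => g a M n) ∧
    (a ^ 2 : ℂ) * ∑' n : ℤ × ℤ, g a M n = 1 / (M ^ 2 : ℂ) ∧
    Summable (fun n : ℤ × ℤ => ‖g a M n‖) ∧
    a ^ 2 * ∑' n : ℤ × ℤ, ‖g a M n‖ = 1 / M ^ 2 := by
  set G := walkKernel (4 + a ^ 2 * M ^ 2)
  have hg (n : ℤ × ℤ) : g a M n = G n := g_eq_walkKernel ha hM.ne' n
  have hG_nonneg (n : ℤ × ℤ) : 0 ≤ G n := walkKernel_nonneg (by positivity) n
  have hG : HasSum G (a ^ 2 * M ^ 2)⁻¹ := by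
    simpa only [add_sub_cancel_left] using
      hasSum_walkKernel (D := 4 + a ^ 2 * M ^ 2) (lt_add_of_pos_right _ (by positivity))
  have hnorm (n : ℤ × ℤ) : ‖g a M n‖ = G n := by
    rw [hg, Complex.norm_real, Real.norm_of_nonneg (hG_nonneg n)]
  have hg_sum : HasSum (fun n => g a M n) ((a ^ 2 * M ^ 2)⁻¹ : ℝ) := by
    simpa only [hg] using Complex.hasSum_ofReal.2 hG
  have hnorm_sum : HasSum (fun n => ‖g a M n‖) (a ^ 2 * M ^ 2)⁻¹ := by
    simpa only [hnorm] using hG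
  refine ⟨fun n => ?_, hg_sum.summable, ?_, hnorm_sum.summable, ?_⟩
  · rw [hg]
    exact ⟨Complex.ofReal_im _, hG_nonneg n⟩
  · have ha' : (a : ℂ) ≠ 0 := by exact_mod_cast ha.ne'
    rw [hg_sum.tsum_eq]
    push_cast
    field_simp
  · rw [hnorm_sum.tsum_eq]
    field_simp

end SommerfieldStmt3
end
end

section
/- Let C₀ be a real symmetric positive semidefinite n×n matrix, S a real symmetric positive semidefinite m×m matrix, D a real n×m matrix, and set C₁ = C₀ + D S Dᵀ. Let F : ℝⁿ → ℝ be bounded and measurable and suppose F is invariant along the range of D, i.e. F(x + D v) = F(x) for all x ∈ ℝⁿ and v ∈ ℝᵐ. Then ∫_{ℝⁿ} F dN(0, C₀) = ∫_{ℝⁿ} F dN(0, C₁), where N(0, C) denotes the centered Gaussian measure on ℝⁿ with covariance matrix C. -/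
/-!
`N(0, C₀ + D S Dᵀ)` is the convolution of `N(0, C₀)` with `N(0, D S Dᵀ)`, and `N(0, D S Dᵀ)` is the
image of `N(0, S)` under `v ↦ D v`; both identities are checked on characteristic functions.
Integrating `F` against the convolution, the translation by `D v` is invisible to `F`, so only
`N(0, C₀)` remains. The square root in `gaussianMeasure` is the continuous functional calculus
square root, so `gaussianMeasure C` is `multivariateGaussian 0 C` transported from
`EuclideanSpace ℝ (Fin n)` to `Fin n → ℝ`.
-/

open Matrix MeasureTheory ProbabilityTheory

open scoped Classical

noncomputable section

namespace SommerfieldStmt6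

/-- The centered Gaussian measure `N(0, C)` on `ℝⁿ` with positive semidefinite
covariance matrix `C`, realized as the pushforward of the standard Gaussian
under multiplication by the positive semidefinite square root of `C` (junk
value `0` if `C` is not positive semidefinite). -/
def gaussianMeasure {n : ℕ} (C : Matrix (Fin n) (Fin n) ℝ) :
    Measure (Fin n → ℝ) :=
  if h : C.PosSemidef then
    Measure.map (fun x => ((h.1.eigenvectorUnitary : Matrix (Fin n) (Fin n) ℝ) *
      diagonal ((↑) ∘ Real.sqrt ∘ h.1.eigenvalues) *
      (star h.1.eigenvectorUnitary : Matrix (Fin n) (Fin n) ℝ)) *ᵥ x) (Measure.pi fun _ => gaussianReal 0 1)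
  else 0

end SommerfieldStmt6

open WithLp
open scoped RealInnerProductSpace MatrixOrder

theorem Matrix.PosSemidef.cfcSqrt_eq_spectral {ι : Type*} [Fintype ι] [DecidableEq ι]
    {C : Matrix ι ι ℝ} (hC : C.PosSemidef) :
    CFC.sqrt C = (hC.1.eigenvectorUnitary : Matrix ι ι ℝ) *
      diagonal ((↑) ∘ Real.sqrt ∘ hC.1.eigenvalues) *
      (star hC.1.eigenvectorUnitary : Matrix ι ι ℝ) := by
  rw [CFC.sqrt_eq_real_sqrt C hC.nonneg, cfcₙ_eq_cfc, hC.1.cfc_eq, IsHermitian.cfc,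
    Unitary.conjStarAlgAut_apply]
  rfl

section Rectangular

variable {ι κ : Type*} [Fintype ι] [Fintype κ] [DecidableEq ι] [DecidableEq κ]

theorem Matrix.inner_toLpLin_eq_inner_transpose (D : Matrix ι κ ℝ) (x : EuclideanSpace ℝ κ)
    (t : EuclideanSpace ℝ ι) :
    ⟪toLpLin 2 2 D x, t⟫ = ⟪x, toLpLin 2 2 Dᵀ t⟫ := by
  simp only [EuclideanSpace.inner_eq_star_dotProduct, toLpLin_apply, star_trivial,
    dotProduct_mulVec, mulVec_transpose]

theorem ProbabilityTheory.charFun_map_toLpLin (μ : Measure (EuclideanSpace ℝ κ))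
    (D : Matrix ι κ ℝ) (t : EuclideanSpace ℝ ι) :
    charFun (μ.map (toLpLin 2 2 D)) t = charFun μ (toLpLin 2 2 Dᵀ t) := by
  rw [charFun_apply, charFun_apply, integral_map (by fun_prop) (by fun_prop)]
  simp_rw [inner_toLpLin_eq_inner_transpose]

theorem ProbabilityTheory.multivariateGaussian_map_toLpLin {μ : EuclideanSpace ℝ κ}
    {S : Matrix κ κ ℝ} (hS : S.PosSemidef) (D : Matrix ι κ ℝ) :
    (multivariateGaussian μ S).map (toLpLin 2 2 D) =
      multivariateGaussian (toLpLin 2 2 D μ) (D * S * Dᵀ) := by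
  have hDSD : (D * S * Dᵀ).PosSemidef := by simpa using hS.mul_mul_conjTranspose_same D
  refine Measure.ext_of_charFun (funext fun t => ?_)
  refine (charFun_map_toLpLin _ D t).trans ?_
  rw [charFun_multivariateGaussian hS, charFun_multivariateGaussian hDSD,
    inner_toLpLin_eq_inner_transpose, transpose_transpose]
  congr 3
  rw [toLpLin_apply, ← mulVec_mulVec, ← mulVec_mulVec, dotProduct_mulVec _ D, mulVec_transpose]

end Rectangular

theorem ProbabilityTheory.multivariateGaussian_add {ι : Type*} [Fintype ι] [DecidableEq ι]
    {μ₁ μ₂ : EuclideanSpace ℝ ι} {S₁ S₂ : Matrix ι ι ℝ}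
    (hS₁ : S₁.PosSemidef) (hS₂ : S₂.PosSemidef) :
    multivariateGaussian (μ₁ + μ₂) (S₁ + S₂) =
      multivariateGaussian μ₁ S₁ ∗ multivariateGaussian μ₂ S₂ := by
  refine Measure.ext_of_charFun (funext fun t => ?_)
  rw [charFun_conv, charFun_multivariateGaussian hS₁, charFun_multivariateGaussian hS₂,
    charFun_multivariateGaussian (hS₁.add hS₂), ← Complex.exp_add]
  congr 1
  simp only [inner_add_right, add_mulVec, dotProduct_add, Complex.ofReal_add]
  ring

theorem MeasureTheory.integral_conv_map_of_forall_add_eq {E G F : Type*} [AddMonoid E]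
    [MeasurableSpace E] [MeasurableAdd₂ E] [MeasurableSpace G] [NormedAddCommGroup F]
    [NormedSpace ℝ F] (μ : Measure E) [SFinite μ] (ρ : Measure G) [IsProbabilityMeasure ρ]
    {g : G → E} (hg : Measurable g) {f : E → F} (hf : StronglyMeasurable f)
    (hfg : ∀ x w, f (x + g w) = f x) :
    ∫ x, f x ∂(μ ∗ ρ.map g) = ∫ x, f x ∂μ := by
  have hconv : μ ∗ ρ.map g = (μ.prod ρ).map fun p => p.1 + g p.2 := by
    rw [Measure.conv, ← Measure.map_id (μ := μ), Measure.map_prod_map _ _ measurable_id hg,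
      Measure.map_id, Measure.map_map (by fun_prop) (by fun_prop)]
    rfl
  rw [hconv, integral_map (by fun_prop) hf.aestronglyMeasurable]
  simp_rw [hfg]
  simp [integral_fun_fst]

namespace SommerfieldStmt6

theorem gaussianMeasure_eq_map_ofLp {n : ℕ} {C : Matrix (Fin n) (Fin n) ℝ}
    (hC : C.PosSemidef) :
    gaussianMeasure C = (multivariateGaussian 0 C).map ofLp := by
  rw [gaussianMeasure, dif_pos hC, multivariateGaussian, ← map_pi_eq_stdGaussian,
    Measure.map_map (by fun_prop) (by fun_prop), Measure.map_map (by fun_prop) (by fun_prop),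
    ← hC.cfcSqrt_eq_spectral]
  congr 1
  funext x
  simp

theorem gaussian_invariance_pure_gauge_shift_general
    {n m : ℕ} (C₀ : Matrix (Fin n) (Fin n) ℝ) (hC₀ : C₀.PosSemidef)
    (S : Matrix (Fin m) (Fin m) ℝ) (hS : S.PosSemidef)
    (D : Matrix (Fin n) (Fin m) ℝ)
    (F : (Fin n → ℝ) → ℝ) (hFmeas : Measurable F)
    (hFinv : ∀ (x : Fin n → ℝ) (v : Fin m → ℝ), F (x + D *ᵥ v) = F x) :
    ∫ x, F x ∂(gaussianMeasure C₀) =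
      ∫ x, F x ∂(gaussianMeasure (C₀ + D * S * Dᵀ)) := by
  have hDSD : (D * S * Dᵀ).PosSemidef := by simpa using hS.mul_mul_conjTranspose_same D
  have hsplit : multivariateGaussian 0 (C₀ + D * S * Dᵀ) =
      multivariateGaussian 0 C₀ ∗ (multivariateGaussian 0 S).map (toLpLin 2 2 D) := by
    rw [multivariateGaussian_map_toLpLin hS, map_zero, ← multivariateGaussian_add hC₀ hDSD,
      zero_add]
  rw [gaussianMeasure_eq_map_ofLp hC₀, gaussianMeasure_eq_map_ofLp (hC₀.add hDSD),
    integral_map (by fun_prop) hFmeas.aestronglyMeasurable,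
    integral_map (by fun_prop) hFmeas.aestronglyMeasurable, hsplit]
  refine (integral_conv_map_of_forall_add_eq _ _ (by fun_prop)
    (hFmeas.comp (by fun_prop)).stronglyMeasurable fun x v => ?_).symm
  simpa [toLpLin_apply] using hFinv x.ofLp v.ofLp

theorem gaussian_invariance_pure_gauge_shift
    {n m : ℕ} (C₀ : Matrix (Fin n) (Fin n) ℝ) (hC₀ : C₀.PosSemidef)
    (S : Matrix (Fin m) (Fin m) ℝ) (hS : S.PosSemidef)
    (D : Matrix (Fin n) (Fin m) ℝ)
    (F : (Fin n → ℝ) → ℝ) (hFmeas : Measurable F)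
    (hFbdd : ∃ B : ℝ, ∀ x, |F x| ≤ B)
    (hFinv : ∀ (x : Fin n → ℝ) (v : Fin m → ℝ), F (x + D *ᵥ v) = F x) :
    ∫ x, F x ∂(gaussianMeasure C₀) =
      ∫ x, F x ∂(gaussianMeasure (C₀ + D * S * Dᵀ)) :=
  gaussian_invariance_pure_gauge_shift_general C₀ hC₀ S hS D F hFmeas hFinv

end SommerfieldStmt6
end
end

section
/- Let ε be the antisymmetric 2×2 symbol with ε_{01} = 1, ε_{10} = −1, ε_{00} = ε_{11} = 0. Let τ ∈ ℝ with τ ≠ 1 and τ ≠ −1, and let Z, Z⁺, Z⁻, Z₅ be nonzero reals satisfying Z⁺ = Z(1−τ) and Z₅ Z⁻ = Z(1+τ). Set c = Z⁺Z⁻/(4π Z²). Let Γ̃ : ℝ²∖{0} → Matrix₂ₓ₂(ℝ) and R : ℝ² → Matrix₂ₓ₂(ℝ) with R continuous at 0, and define Γ̂_{μν}(p) = Z₅ Γ̃_{μν}(p) + R_{μν}(p) for p ≠ 0. Assume for all p ≠ 0 and all μ, ν ∈ {0,1}: (i) ∑_μ p_μ Γ̃_{μν}(p) = (c/(1+τ))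 ∑_μ ε_{μν} p_μ; (ii) ∑_ν p_ν Γ̃_{μν}(p) = (c/(1−τ)) ∑_ν ε_{νμ} p_ν; (iii) ∑_ν p_ν Γ̂_{μν}(p) = 0. Then R_{μν}(0) = ((1+τ)/(4π)) ε_{μν} for all μ, ν, and for each ν, ∑_μ p_μ Γ̂_{μν}(p) = (1/(2π)) ∑_μ ε_{μν} p_μ + o(|p|) as p → 0; in particular the anomaly coefficient 1/(2π) is independent of τ (and hence of the coupling). -/
/-!
Statement 11: algebraic core of the Adler–Bardeen anomaly non-renormalization:
matching the lattice Ward identity with the anomalous continuum Ward identities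
fixes `R_{μν}(0) = ((1+τ)/4π) ε_{μν}` and yields
`∑_μ p_μ Γ̂_{μν}(p) = (1/2π) ∑_μ ε_{μν} p_μ + o(|p|)`,
with all `τ`-dependence cancelling.
-/

open Real Asymptotics Filter Topology

noncomputable section

namespace SommerfieldStmt11

/-- The two-dimensional Levi-Civita symbol: `ε_{01} = 1`, `ε_{10} = −1`,
`ε_{00} = ε_{11} = 0`. -/
def eps : Matrix (Fin 2) (Fin 2) ℝ := !![0, 1; -1, 0]

lemma abs_apply_le (p : EuclideanSpace ℝ (Fin 2)) (μ : Fin 2) : |p μ| ≤ ‖p‖ := by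
  rw [EuclideanSpace.norm_eq, ← Real.sqrt_sq_eq_abs]
  apply Real.sqrt_le_sqrt
  calc p μ ^ 2 ≤ ∑ i : Fin 2, p i ^ 2 :=
        Finset.single_le_sum (f := fun i => p i ^ 2) (fun i _ => sq_nonneg _) (Finset.mem_univ μ)
    _ = ∑ i : Fin 2, ‖p i‖ ^ 2 := by simp [Real.norm_eq_abs, sq_abs]

theorem anomaly_nonrenormalization
    (τ : ℝ) (hτ1 : τ ≠ 1) (hτ2 : τ ≠ -1)
    (Z Zp Zm Z5 : ℝ) (hZ : Z ≠ 0) (hZp : Zp ≠ 0) (hZm : Zm ≠ 0) (hZ5 : Z5 ≠ 0)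
    (hplus : Zp = Z * (1 - τ)) (hminus : Z5 * Zm = Z * (1 + τ))
    (Γtil : EuclideanSpace ℝ (Fin 2) → Matrix (Fin 2) (Fin 2) ℝ)
    (R : EuclideanSpace ℝ (Fin 2) → Matrix (Fin 2) (Fin 2) ℝ)
    (hR : ContinuousAt R 0)
    -- (i) anomalous continuum Ward identity for the first index
    (hWI1 : ∀ p : EuclideanSpace ℝ (Fin 2), p ≠ 0 → ∀ ν : Fin 2,
      ∑ μ : Fin 2, p μ * Γtil p μ ν =
        (Zp * Zm / (4 * π * Z ^ 2) / (1 + τ)) * ∑ μ : Fin 2, eps μ ν * p μ)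
    -- (ii) anomalous continuum Ward identity for the second index
    (hWI2 : ∀ p : EuclideanSpace ℝ (Fin 2), p ≠ 0 → ∀ μ : Fin 2,
      ∑ ν : Fin 2, p ν * Γtil p μ ν =
        (Zp * Zm / (4 * π * Z ^ 2) / (1 - τ)) * ∑ ν : Fin 2, eps ν μ * p ν)
    -- (iii) exact lattice vector Ward identity for `Γ̂ = Z₅ Γ̃ + R`
    (hWI3 : ∀ p : EuclideanSpace ℝ (Fin 2), p ≠ 0 → ∀ μ : Fin 2,
      ∑ ν : Fin 2, p ν * (Z5 * Γtil p μ ν + R p μ ν) = 0) :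
    (∀ μ ν : Fin 2, R 0 μ ν = ((1 + τ) / (4 * π)) * eps μ ν) ∧
    (∀ ν : Fin 2,
      (fun p : EuclideanSpace ℝ (Fin 2) =>
          (∑ μ : Fin 2, p μ * (Z5 * Γtil p μ ν + R p μ ν)) -
            (1 / (2 * π)) * ∑ μ : Fin 2, eps μ ν * p μ)
        =o[𝓝[≠] (0 : EuclideanSpace ℝ (Fin 2))] fun p => ‖p‖) := by
  have hπ : (π : ℝ) ≠ 0 := Real.pi_ne_zero
  have h1m : (1 : ℝ) - τ ≠ 0 := sub_ne_zero.mpr (Ne.symm hτ1)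
  have h1p : (1 : ℝ) + τ ≠ 0 := by
    intro h; apply hτ2; linarith
  have hZm' : Zm = Z * (1 + τ) / Z5 := by
    field_simp
    linear_combination hminus
  set c : ℝ := Zp * Zm / (4 * π * Z ^ 2) with hc
  have key1 : Z5 * (c / (1 + τ)) = (1 - τ) / (4 * π) := by
    rw [hc, hplus, hZm']; field_simp
  have key2 : Z5 * (c / (1 - τ)) = (1 + τ) / (4 * π) := by
    rw [hc, hplus, hZm']; field_simp
  have h2π : (1 - τ) / (4 * π) + (1 + τ) / (4 * π) = 1 / (2 * π) := by
    field_simp; ring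
  -- divergence of R
  have hRid : ∀ p : EuclideanSpace ℝ (Fin 2), p ≠ 0 → ∀ μ : Fin 2,
      ∑ ν : Fin 2, p ν * R p μ ν = ((1 + τ) / (4 * π)) * ∑ ν : Fin 2, eps μ ν * p ν := by
    intro p hp μ
    have h2 := hWI2 p hp μ
    have h3 := hWI3 p hp μ
    simp only [Fin.sum_univ_two] at h2 h3 ⊢
    fin_cases μ <;>
      simp only [eps, Fin.mk_zero, Fin.mk_one, Fin.isValue, Matrix.cons_val', Matrix.cons_val_zero,
        Matrix.cons_val_one, Matrix.head_cons, Matrix.head_fin_const, Matrix.empty_val',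
        Matrix.cons_val_fin_one, Matrix.of_apply] at h2 h3 ⊢
    · linear_combination h3 - Z5 * h2 + p 1 * key2
    · linear_combination h3 - Z5 * h2 - p 0 * key2
  -- value of R at 0
  have hR0 : ∀ μ ν : Fin 2, R 0 μ ν = ((1 + τ) / (4 * π)) * eps μ ν := by
    intro μ ν
    set v : EuclideanSpace ℝ (Fin 2) := EuclideanSpace.single ν 1 with hv
    have hvk : ∀ (t : ℝ) (k : Fin 2), (t • v) k = if k = ν then t else 0 := by
      intro t k
      simp [hv, EuclideanSpace.single_apply, PiLp.smul_apply, smul_eq_mul, mul_ite, mul_one,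
        mul_zero]
    have hconst : ∀ t : ℝ, t ≠ 0 → R (t • v) μ ν = ((1 + τ) / (4 * π)) * eps μ ν := by
      intro t ht
      have hne : (t • v) ≠ 0 := by
        intro h0
        have h1 : (t • v) ν = t := by rw [hvk]; simp
        rw [h0] at h1
        exact ht (by simpa using h1.symm)
      have h := hRid (t • v) hne μ
      have hL : ∑ k : Fin 2, (t • v) k * R (t • v) μ k = t * R (t • v) μ ν := by
        simp only [hvk, ite_mul, zero_mul]
        simp [Finset.sum_ite_eq']
      have hS : ∑ k : Fin 2, eps μ k * (t • v) k = eps μ ν * t := by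
        simp only [hvk, mul_ite, mul_zero]
        simp [Finset.sum_ite_eq']
      rw [hL, hS] at h
      have h' : t * R (t • v) μ ν = t * (((1 + τ) / (4 * π)) * eps μ ν) := by
        linear_combination h
      exact mul_left_cancel₀ ht h'
    have hlim : Tendsto (fun t : ℝ => R (t • v) μ ν) (𝓝[≠] (0 : ℝ)) (𝓝 (R 0 μ ν)) := by
      have h1 : Tendsto (fun t : ℝ => t • v) (𝓝 (0 : ℝ))
          (𝓝 (0 : EuclideanSpace ℝ (Fin 2))) := by
        have hcv : Continuous fun t : ℝ => t • v := continuous_id.smul continuous_const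
        simpa using hcv.tendsto 0
      have h2 : Tendsto (fun M : Matrix (Fin 2) (Fin 2) ℝ => M μ ν) (𝓝 (R 0))
          (𝓝 (R 0 μ ν)) :=
        ((continuous_id.matrix_elem μ ν).tendsto (R 0))
      exact h2.comp (hR.tendsto.comp (h1.mono_left nhdsWithin_le_nhds))
    have hlim' : Tendsto (fun t : ℝ => R (t • v) μ ν) (𝓝[≠] (0 : ℝ))
        (𝓝 (((1 + τ) / (4 * π)) * eps μ ν)) := by
      apply Tendsto.congr' _ tendsto_const_nhds
      filter_upwards [self_mem_nhdsWithin] with t ht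
      exact (hconst t ht).symm
    exact tendsto_nhds_unique hlim hlim'
  refine ⟨hR0, fun ν => ?_⟩
  have heq : ∀ p : EuclideanSpace ℝ (Fin 2), p ≠ 0 →
      ((∑ μ : Fin 2, p μ * (Z5 * Γtil p μ ν + R p μ ν)) -
          (1 / (2 * π)) * ∑ μ : Fin 2, eps μ ν * p μ)
        = ∑ μ : Fin 2, p μ * (R p μ ν - R 0 μ ν) := by
    intro p hp
    have h1 := hWI1 p hp ν
    simp only [Fin.sum_univ_two] at h1 ⊢
    rw [hR0 0 ν, hR0 1 ν]
    fin_cases ν <;>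
      simp only [eps, Fin.mk_zero, Fin.mk_one, Fin.isValue, Matrix.cons_val', Matrix.cons_val_zero,
        Matrix.cons_val_one, Matrix.head_cons, Matrix.head_fin_const, Matrix.empty_val',
        Matrix.cons_val_fin_one, Matrix.of_apply] at h1 ⊢
    · linear_combination Z5 * h1 - p 1 * key1 - p 1 * h2π
    · linear_combination Z5 * h1 + p 0 * key1 + p 0 * h2π
  have hsmall : ∀ μ : Fin 2,
      (fun p : EuclideanSpace ℝ (Fin 2) => p μ * (R p μ ν - R 0 μ ν))
        =o[𝓝[≠] (0 : EuclideanSpace ℝ (Fin 2))] fun p => ‖p‖ := by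
    intro μ
    have hO : (fun p : EuclideanSpace ℝ (Fin 2) => p μ)
        =O[𝓝[≠] (0 : EuclideanSpace ℝ (Fin 2))] fun p => ‖p‖ :=
      IsBigO.of_bound 1 (Eventually.of_forall fun p => by
        simpa [Real.norm_eq_abs, abs_norm] using abs_apply_le p μ)
    have ho : (fun p : EuclideanSpace ℝ (Fin 2) => R p μ ν - R 0 μ ν)
        =o[𝓝[≠] (0 : EuclideanSpace ℝ (Fin 2))] fun _ => (1 : ℝ) := by
      rw [isLittleO_one_iff]
      have h2 : Tendsto (fun p : EuclideanSpace ℝ (Fin 2) => R p μ ν) (𝓝 0)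
          (𝓝 (R 0 μ ν)) :=
        ((continuous_id.matrix_elem μ ν).tendsto (R 0)).comp hR.tendsto
      have := h2.sub (tendsto_const_nhds (x := R 0 μ ν))
      rw [sub_self] at this
      exact this.mono_left nhdsWithin_le_nhds
    simpa using hO.mul_isLittleO ho
  have hsum := (hsmall 0).add (hsmall 1)
  refine hsum.congr' ?_ EventuallyEq.rfl
  filter_upwards [self_mem_nhdsWithin] with p hp
  have := (heq p hp).symm
  simpa [Fin.sum_univ_two] using this


end SommerfieldStmt11
end
end
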